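/- arXiv:1706.02830 — 2 statements merged into one kernel-verified Lean document; each statement's English description precedes it below -/
import Mathlib

section
/- Let G be a simple graph that contains no cycle of length 5 as a subgraph. Then there exists a subgraph H of G (on the same vertex set, with edge set contained in that of G) such that H contains no cycle of length 4 and no cycle of length 5 as a subgraph, and the number of edges of H equals the number of triangles of G. -/
/-!
In a `C5`-free graph a vertex outside a 4-clique has at most one neighbour in it, so two
4-cliques share at most one vertex and every triangle lies in at most one 4-clique. A triangle
in no 4-clique has an edge lying in no other triangle (otherwise a fourth vertex or a 5-cycle
appears), and selects it; the four triangles of a 4-clique select four of its edges forming a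
triangle with a pendant edge. The selection is injective. A 4-cycle of selected edges has a chord
in `G`, since a common neighbour of two consecutive vertices off the cycle closes a 5-cycle; the
chord forces either all four vertices into one 4-clique or two of the edges to be selected by the
same triangle.
-/

/-- A graph is `C5`-free if it contains no cycle of length 5 as a subgraph. -/
def C5Free {V : Type*} (G : SimpleGraph V) : Prop :=
  ∀ (v : V) (w : G.Walk v v), w.IsCycle → w.length ≠ 5

/-- A graph is `C4`-free if it contains no cycle of length 4 as a subgraph. -/
def C4Free {V : Type*} (G : SimpleGraph V) : Prop :=
  ∀ (v : V) (w : G.Walk v v), w.IsCycle → w.length ≠ 4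

open SimpleGraph

section

variable {V : Type*} {G H : SimpleGraph V}

theorem C5Free.mono (hG : C5Free G) (hHG : H ≤ G) : C5Free H := fun v w hw => by
  simpa using hG v (w.mapLe hHG) (hw.mapLe hHG)

theorem C5Free.false_of_adj (hG : C5Free G) {a b c d e : V}
    (hab : G.Adj a b) (hbc : G.Adj b c) (hcd : G.Adj c d) (hde : G.Adj d e) (hea : G.Adj e a)
    (hac : a ≠ c) (had : a ≠ d) (hbd : b ≠ d) (hbe : b ≠ e) (hce : c ≠ e) : False := by
  refine hG a (.cons hab (.cons hbc (.cons hcd (.cons hde (.cons hea .nil))))) ?_ rfl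
  simp [Walk.cons_isCycle_iff, Walk.cons_isPath_iff, hab.ne, hbc.ne, hcd.ne, hde.ne, hea.ne,
    hab.ne.symm, hea.ne.symm, hac, had, hbd, hbe, hce, hac.symm, had.symm]

theorem SimpleGraph.Walk.IsCycle.exists_adj_of_length_eq_four {v : V} {w : H.Walk v v}
    (hw : w.IsCycle) (h4 : w.length = 4) :
    ∃ a b c d, H.Adj a b ∧ H.Adj b c ∧ H.Adj c d ∧ H.Adj d a ∧ a ≠ c ∧ b ≠ d := by
  have hinj {i j : ℕ} (hi : i ≤ 3) (hj : j ≤ 3) (hij : i ≠ j) : w.getVert i ≠ w.getVert j :=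
    fun h => hij (hw.getVert_injOn' (by simp; omega) (by simp; omega) h)
  refine ⟨w.getVert 0, w.getVert 1, w.getVert 2, w.getVert 3, w.adj_getVert_succ (by omega),
    w.adj_getVert_succ (by omega), w.adj_getVert_succ (by omega), ?_, hinj (by omega) (by omega)
    (by omega), hinj (by omega) (by omega) (by omega)⟩
  simpa [← h4, Walk.getVert_length] using w.adj_getVert_succ (i := 3) (by omega)

section Cliques

variable [DecidableEq V] {n : ℕ} {s : Finset V} {x y : V}

theorem SimpleGraph.IsNClique.card_erase_erase (hs : G.IsNClique n s) (hx : x ∈ s) (hy : y ∈ s)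
    (hxy : x ≠ y) : ((s.erase x).erase y).card = n - 2 := by
  rw [Finset.card_erase_of_mem (Finset.mem_erase.2 ⟨hxy.symm, hy⟩), Finset.card_erase_of_mem hx,
    hs.card_eq]
  omega

theorem SimpleGraph.IsClique.erase_erase_subset_commonNeighbors (hs : G.IsClique (s : Set V))
    (hx : x ∈ s) (hy : y ∈ s) : ↑((s.erase x).erase y) ⊆ G.commonNeighbors x y := by
  intro u hu
  simp only [Finset.coe_erase, Set.mem_sdiff, Finset.mem_coe, Set.mem_singleton_iff] at hu
  exact ⟨hs hx hu.1.1 (Ne.symm hu.1.2), hs hy hu.1.1 (Ne.symm hu.2)⟩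

theorem SimpleGraph.IsNClique.commonNeighbors_nonempty (hs : G.IsNClique n s) (hn : 3 ≤ n)
    (hx : x ∈ s) (hy : y ∈ s) (hxy : x ≠ y) : (G.commonNeighbors x y).Nonempty :=
  Set.Nonempty.mono (hs.isClique.erase_erase_subset_commonNeighbors hx hy) <|
    Finset.coe_nonempty.2 <| Finset.card_pos.1 <| by rw [hs.card_erase_erase hx hy hxy]; omega

theorem SimpleGraph.IsNClique.commonNeighbors_nontrivial (hs : G.IsNClique n s) (hn : 4 ≤ n)
    (hx : x ∈ s) (hy : y ∈ s) (hxy : x ≠ y) : (G.commonNeighbors x y).Nontrivial :=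
  Set.Nontrivial.mono
    (Finset.one_lt_card_iff_nontrivial.1 <| by rw [hs.card_erase_erase hx hy hxy]; omega)
    (hs.isClique.erase_erase_subset_commonNeighbors hx hy)

theorem SimpleGraph.IsNClique.eq_insert_of_subsingleton {t : Finset V} {z : V}
    (ht : G.IsNClique 3 t) (hx : x ∈ t) (hy : y ∈ t) (hxy : x ≠ y)
    (hS : (G.commonNeighbors x y).Subsingleton) (hz : z ∈ G.commonNeighbors x y) :
    t = {x, y, z} := by
  obtain ⟨w, hw⟩ := Finset.card_eq_one.1 (ht.card_erase_erase hx hy hxy)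
  have hwz : w = z :=
    hS (ht.isClique.erase_erase_subset_commonNeighbors hx hy (by simp [hw])) hz
  rw [← Finset.insert_erase hx, ← Finset.insert_erase (Finset.mem_erase.2 ⟨hxy.symm, hy⟩), hw,
    hwz]

end Cliques

section C5Free

variable [DecidableEq V] (hG : C5Free G) {s s' : Finset V} {x y z : V}
include hG

theorem C5Free.mem_of_adj_of_adj (hs : G.IsNClique 4 s) (hx : x ∈ s) (hy : y ∈ s) (hxy : x ≠ y)
    (hzx : G.Adj z x) (hzy : G.Adj z y) : z ∈ s := by
  by_contra hz
  obtain ⟨u, hu, v, hv, huv⟩ := Finset.one_lt_card.1 (show 1 < ((s.erase x).erase y).card by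
    rw [hs.card_erase_erase hx hy hxy]; omega)
  simp only [Finset.mem_erase] at hu hv
  exact hG.false_of_adj hzx (hs.1 hx hu.2.2 (Ne.symm hu.2.1)) (hs.1 hu.2.2 hv.2.2 huv)
    (hs.1 hv.2.2 hy hv.1) hzy.symm (fun h => hz (h ▸ hu.2.2)) (fun h => hz (h ▸ hv.2.2))
    (Ne.symm hv.2.1) hxy hu.1

theorem C5Free.eq_of_isNClique_four (hs : G.IsNClique 4 s) (hs' : G.IsNClique 4 s')
    (hx : x ∈ s) (hy : y ∈ s) (hx' : x ∈ s') (hy' : y ∈ s') (hxy : x ≠ y) : s = s' := by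
  refine Finset.eq_of_subset_of_card_le (fun z hz => ?_) (by rw [hs.card_eq, hs'.card_eq])
  by_cases hzx : z = x
  · exact hzx ▸ hx'
  by_cases hzy : z = y
  · exact hzy ▸ hy'
  exact hG.mem_of_adj_of_adj hs' hx' hy' hxy (hs.1 hz hx hzx) (hs.1 hz hy hzy)

theorem C5Free.exists_adj_adj_adj_of_nontrivial {a b c : V} (hab : G.Adj a b) (hac : G.Adj a c)
    (hbc : G.Adj b c) (hab' : (G.commonNeighbors a b).Nontrivial)
    (hbc' : (G.commonNeighbors b c).Nontrivial) : ∃ w, G.Adj w a ∧ G.Adj w b ∧ G.Adj w c := by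
  obtain ⟨x, ⟨hax, hbx⟩, hxc⟩ := hab'.exists_ne c
  obtain ⟨y, ⟨hby, hcy⟩, hya⟩ := hbc'.exists_ne a
  by_cases hxy : x = y
  · exact ⟨x, hax.symm, hbx.symm, hxy ▸ hcy.symm⟩
  · exact (hG.false_of_adj hax.symm hac hcy hby.symm hbx hxc hxy (Ne.symm hya) hab.ne
      hbc.ne.symm).elim

end C5Free

section CliqueEdge

variable [LinearOrder V] {s : Finset V} {v v' u D x : V} {e : Sym2 V}

/-- The edge selected by the triangle `s.erase v` of a 4-clique `s` with greatest vertex `D`.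
The four selected edges form the triangle `s.erase D` with a pendant edge at `D`, so they
contain no 4-cycle. -/
def IsCliqueEdge (s : Finset V) (v : V) (e : Sym2 V) : Prop :=
  ∃ D, IsGreatest (s : Set V) D ∧
    ((v = D ∧ ∃ M, IsGreatest ((s.erase D : Finset V) : Set V) M ∧ e = s(M, D)) ∨
      (v ≠ D ∧ ∃ x y, x ≠ y ∧ (s.erase v).erase D = {x, y} ∧ e = s(x, y)))

theorem exists_isCliqueEdge (hs : s.card = 4) (hv : v ∈ s) : ∃ e, IsCliqueEdge s v e := by
  have hD := s.isGreatest_max' ⟨v, hv⟩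
  by_cases hvD : v = s.max' ⟨v, hv⟩
  · have hne : (s.erase (s.max' ⟨v, hv⟩)).Nonempty :=
      Finset.card_pos.1 (by rw [Finset.card_erase_of_mem hD.1, hs]; omega)
    exact ⟨_, _, hD, .inl ⟨hvD, _, Finset.isGreatest_max' _ hne, rfl⟩⟩
  · obtain ⟨x, y, hxy, he⟩ := Finset.card_eq_two.1 (show ((s.erase v).erase _).card = 2 by
      rw [Finset.card_erase_of_mem (Finset.mem_erase.2 ⟨Ne.symm hvD, hD.1⟩),
        Finset.card_erase_of_mem hv, hs])
    exact ⟨_, _, hD, .inr ⟨hvD, x, y, hxy, he, rfl⟩⟩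

theorem IsCliqueEdge.mem (h : IsCliqueEdge s v e) (hu : u ∈ e) : u ∈ s := by
  obtain ⟨D, hD, ⟨-, M, hM, rfl⟩ | ⟨-, x, y, -, hxy, rfl⟩⟩ := h
  · rcases Sym2.mem_iff.1 hu with rfl | rfl
    · exact Finset.mem_of_mem_erase hM.1
    · exact hD.1
  · have : u ∈ (s.erase v).erase D := by rw [hxy]; simpa [Sym2.mem_iff] using hu
    exact Finset.mem_of_mem_erase (Finset.mem_of_mem_erase this)

theorem IsCliqueEdge.not_isDiag (h : IsCliqueEdge s v e) : ¬ e.IsDiag := by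
  obtain ⟨D, -, ⟨-, M, hM, rfl⟩ | ⟨-, x, y, hxy, -, rfl⟩⟩ := h
  · exact Sym2.mk_isDiag_iff.not.2 (Finset.ne_of_mem_erase hM.1)
  · exact Sym2.mk_isDiag_iff.not.2 hxy

theorem IsCliqueEdge.mem_iff_of_ne (h : IsCliqueEdge s v e) (hD : IsGreatest (s : Set V) D)
    (hvD : v ≠ D) : u ∈ e ↔ u ∈ (s.erase v).erase D := by
  obtain ⟨D', hD', ⟨hvD', -⟩ | ⟨-, x, y, -, hxy, rfl⟩⟩ := h <;> obtain rfl := hD.unique hD'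
  · exact absurd hvD' hvD
  · simp [hxy, Sym2.mem_iff]

theorem IsCliqueEdge.top_mem_iff (h : IsCliqueEdge s v e) (hD : IsGreatest (s : Set V) D) :
    D ∈ e ↔ v = D := by
  by_cases hvD : v = D
  · obtain ⟨D', hD', ⟨-, M, -, rfl⟩ | ⟨hvD', -⟩⟩ := h <;> obtain rfl := hD.unique hD'
    · simp [hvD]
    · exact absurd hvD hvD'
  · simp [h.mem_iff_of_ne hD hvD, hvD]

theorem IsCliqueEdge.inj (h : IsCliqueEdge s v e) (h' : IsCliqueEdge s v' e) (hv : v ∈ s) :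
    v = v' := by
  obtain ⟨D, hD, -⟩ := id h
  by_cases hvD : v = D
  · exact hvD.trans ((h'.top_mem_iff hD).1 ((h.top_mem_iff hD).2 hvD)).symm
  have hv'D : v' ≠ D := fun hv'D => hvD ((h.top_mem_iff hD).1 ((h'.top_mem_iff hD).2 hv'D))
  by_contra hvv'
  have hve : v ∈ e := (h'.mem_iff_of_ne hD hv'D).2 (by simp [hv, hvv', hvD])
  simp [h.mem_iff_of_ne hD hvD] at hve

theorem IsCliqueEdge.isGreatest_of_mk (h : IsCliqueEdge s v s(D, x))
    (hD : IsGreatest (s : Set V) D) : IsGreatest ((s.erase D : Finset V) : Set V) x := by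
  have hvD := (h.top_mem_iff hD).1 (Sym2.mem_mk_left D x)
  obtain ⟨D', hD', ⟨-, M, hM, he⟩ | ⟨hvD', -⟩⟩ := h <;> obtain rfl := hD.unique hD'
  · rcases Sym2.eq_iff.1 he with ⟨hDM, -⟩ | ⟨-, rfl⟩
    · exact absurd hDM.symm (Finset.ne_of_mem_erase hM.1)
    · exact hM
  · exact absurd hvD hvD'

end CliqueEdge

section Selection

variable [LinearOrder V] {t : Finset V} {x y : V} {e : Sym2 V}

/-- The edges a triangle `t` may select: a triangle inside a 4-clique follows the rule of its
4-clique, any other triangle takes one of its edges lying in no other triangle. -/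
def IsSelectedEdge (G : SimpleGraph V) (t : Finset V) (e : Sym2 V) : Prop :=
  (∃ s v, G.IsNClique 4 s ∧ v ∈ s ∧ t = s.erase v ∧ IsCliqueEdge s v e) ∨
    ∃ x ∈ t, ∃ y ∈ t, x ≠ y ∧ (G.commonNeighbors x y).Subsingleton ∧ e = s(x, y)

theorem exists_isSelectedEdge (hG : C5Free G) (ht : G.IsNClique 3 t) :
    ∃ e, IsSelectedEdge G t e := by
  by_cases hw : ∃ w, ∀ u ∈ t, G.Adj w u
  · obtain ⟨w, hw⟩ := hw
    have hwt : w ∉ t := fun h => (hw w h).ne rfl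
    obtain ⟨e, he⟩ := exists_isCliqueEdge (ht.insert hw).card_eq (Finset.mem_insert_self w t)
    exact ⟨e, .inl ⟨_, w, ht.insert hw, Finset.mem_insert_self w t,
      (Finset.erase_insert hwt).symm, he⟩⟩
  obtain ⟨a, b, c, hab, hac, hbc, rfl⟩ := is3Clique_iff.1 ht
  by_cases hab' : (G.commonNeighbors a b).Subsingleton
  · exact ⟨_, .inr ⟨a, by simp, b, by simp, hab.ne, hab', rfl⟩⟩
  by_cases hbc' : (G.commonNeighbors b c).Subsingleton
  · exact ⟨_, .inr ⟨b, by simp, c, by simp, hbc.ne, hbc', rfl⟩⟩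
  obtain ⟨w, hwa, hwb, hwc⟩ := hG.exists_adj_adj_adj_of_nontrivial hab hac hbc
    (Set.not_subsingleton_iff.1 hab') (Set.not_subsingleton_iff.1 hbc')
  exact absurd ⟨w, by simp [hwa, hwb, hwc]⟩ hw

theorem IsSelectedEdge.mem_edgeSet (ht : G.IsNClique 3 t) (h : IsSelectedEdge G t e) :
    e ∈ G.edgeSet := by
  rcases h with ⟨s, v, hs, -, -, he⟩ | ⟨x, hx, y, hy, hxy, -, rfl⟩
  · induction e using Sym2.ind with | _ x y =>
    exact hs.1 (he.mem (Sym2.mem_mk_left x y)) (he.mem (Sym2.mem_mk_right x y))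
      (Sym2.mk_isDiag_iff.not.1 he.not_isDiag)
  · exact ht.1 hx hy hxy

theorem IsSelectedEdge.mem_of_subsingleton (h : IsSelectedEdge G t s(x, y))
    (hS : (G.commonNeighbors x y).Subsingleton) : x ∈ t ∧ y ∈ t := by
  rcases h with ⟨s, v, hs, -, -, he⟩ | ⟨x', hx', y', hy', -, -, he⟩
  · exact absurd hS (hs.commonNeighbors_nontrivial le_rfl (he.mem (Sym2.mem_mk_left x y))
      (he.mem (Sym2.mem_mk_right x y)) (Sym2.mk_isDiag_iff.not.1 he.not_isDiag)).not_subsingleton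
  · rcases Sym2.eq_iff.1 he with ⟨rfl, rfl⟩ | ⟨rfl, rfl⟩
    · exact ⟨hx', hy'⟩
    · exact ⟨hy', hx'⟩

theorem IsSelectedEdge.exists_isCliqueEdge (h : IsSelectedEdge G t s(x, y))
    (hS : ¬ (G.commonNeighbors x y).Subsingleton) :
    ∃ s v, G.IsNClique 4 s ∧ v ∈ s ∧ t = s.erase v ∧ IsCliqueEdge s v s(x, y) := by
  refine h.resolve_right ?_
  rintro ⟨x', -, y', -, -, hS', he⟩
  rcases Sym2.eq_iff.1 he with ⟨rfl, rfl⟩ | ⟨rfl, rfl⟩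
  · exact hS hS'
  · exact hS (G.commonNeighbors_symm _ _ ▸ hS')

theorem IsSelectedEdge.inj (hG : C5Free G) {t' : Finset V} (ht : G.IsNClique 3 t)
    (ht' : G.IsNClique 3 t') (h : IsSelectedEdge G t e) (h' : IsSelectedEdge G t' e) :
    t = t' := by
  induction e using Sym2.ind with | _ x y =>
  have hxy : x ≠ y := (h.mem_edgeSet ht).ne
  by_cases hS : (G.commonNeighbors x y).Subsingleton
  · obtain ⟨hx, hy⟩ := h.mem_of_subsingleton hS
    obtain ⟨hx', hy'⟩ := h'.mem_of_subsingleton hS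
    obtain ⟨z, hz⟩ := ht.commonNeighbors_nonempty le_rfl hx hy hxy
    rw [ht.eq_insert_of_subsingleton hx hy hxy hS hz,
      ht'.eq_insert_of_subsingleton hx' hy' hxy hS hz]
  · obtain ⟨s, v, hs, hv, rfl, he⟩ := h.exists_isCliqueEdge hS
    obtain ⟨s', v', hs', -, rfl, he'⟩ := h'.exists_isCliqueEdge hS
    obtain rfl := hG.eq_of_isNClique_four hs hs' (he.mem (Sym2.mem_mk_left x y))
      (he.mem (Sym2.mem_mk_right x y)) (he'.mem (Sym2.mem_mk_left x y))
      (he'.mem (Sym2.mem_mk_right x y)) hxy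
    rw [he.inj he' hv]

end Selection

section SelectedGraph

variable [LinearOrder V] (hG : C5Free G) {f : G.cliqueSet 3 → Sym2 V}
  (hf : ∀ t : G.cliqueSet 3, IsSelectedEdge G t (f t))
include hf

theorem fromEdgeSet_range_le : fromEdgeSet (Set.range f) ≤ G := by
  intro x y hxy
  obtain ⟨⟨t, he⟩, -⟩ := (fromEdgeSet_adj _).1 hxy
  rw [← mem_edgeSet, ← he]
  exact (hf t).mem_edgeSet t.2

theorem isNClique_four_or_subsingleton_of_adj (hxy : (fromEdgeSet (Set.range f)).Adj x y) :
    (∃ s, G.IsNClique 4 s ∧ x ∈ s ∧ y ∈ s) ∨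
      (G.commonNeighbors x y).Subsingleton ∧ ∃ t, f t = s(x, y) ∧ x ∈ t.1 ∧ y ∈ t.1 := by
  obtain ⟨⟨t, he⟩, -⟩ := (fromEdgeSet_adj _).1 hxy
  have h := he ▸ hf t
  by_cases hS : (G.commonNeighbors x y).Subsingleton
  · exact .inr ⟨hS, t, he, h.mem_of_subsingleton hS⟩
  · obtain ⟨s, v, hs, -, -, he'⟩ := h.exists_isCliqueEdge hS
    exact .inl ⟨s, hs, he'.mem (Sym2.mem_mk_left x y), he'.mem (Sym2.mem_mk_right x y)⟩

include hG

theorem ncard_edgeSet_fromEdgeSet_range :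
    (fromEdgeSet (Set.range f)).edgeSet.ncard = (G.cliqueSet 3).ncard := by
  have hdiag : Disjoint (Set.range f) Sym2.diagSet := Set.disjoint_left.2 <| by
    rintro _ ⟨t, rfl⟩
    exact G.not_isDiag_of_mem_edgeSet ((hf t).mem_edgeSet t.2)
  rw [edgeSet_fromEdgeSet, sdiff_eq_left.2 hdiag, Set.ncard_range_of_injective, Nat.card_coe_set_eq]
  exact fun t t' h => Subtype.ext ((hf t).inj hG t.2 t'.2 (h ▸ hf t'))

theorem isGreatest_erase_of_adj {s : Finset V} {D : V} (hs : G.IsNClique 4 s)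
    (hD : IsGreatest (s : Set V) D) (hx : x ∈ s) (hDx : (fromEdgeSet (Set.range f)).Adj D x) :
    IsGreatest ((s.erase D : Finset V) : Set V) x := by
  obtain ⟨⟨t, he⟩, hDx⟩ := (fromEdgeSet_adj _).1 hDx
  obtain ⟨s', v, hs', -, -, h⟩ := (he ▸ hf t).exists_isCliqueEdge
    (hs.commonNeighbors_nontrivial le_rfl hD.1 hx hDx).not_subsingleton
  obtain rfl := hG.eq_of_isNClique_four hs' hs (h.mem (Sym2.mem_mk_left D x))
    (h.mem (Sym2.mem_mk_right D x)) hD.1 hx hDx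
  exact h.isGreatest_of_mk hD

theorem false_of_isNClique_four {s : Finset V} {a b c d : V} (hs : G.IsNClique 4 s)
    (ha : a ∈ s) (hb : b ∈ s) (hc : c ∈ s) (hd : d ∈ s)
    (hab : (fromEdgeSet (Set.range f)).Adj a b) (hbc : (fromEdgeSet (Set.range f)).Adj b c)
    (hcd : (fromEdgeSet (Set.range f)).Adj c d) (hda : (fromEdgeSet (Set.range f)).Adj d a)
    (hac : a ≠ c) (hbd : b ≠ d) : False := by
  obtain ⟨D, hD⟩ : ∃ D, IsGreatest (s : Set V) D := ⟨_, s.isGreatest_max' ⟨a, ha⟩⟩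
  have hpendant {x y : V} (hx : x ∈ s) (hy : y ∈ s) (hDx : (fromEdgeSet (Set.range f)).Adj D x)
      (hDy : (fromEdgeSet (Set.range f)).Adj D y) : x = y :=
    (isGreatest_erase_of_adj hG hf hs hD hx hDx).unique (isGreatest_erase_of_adj hG hf hs hD hy hDy)
  have hcard : s.card ≤ ({a, b, c, d} : Finset V).card := by
    rw [hs.card_eq, Finset.card_insert_of_notMem (by simp [hab.ne, hac, hda.ne.symm]),
      Finset.card_insert_of_notMem (by simp [hbc.ne, hbd]), Finset.card_pair hcd.ne]
  have hsub : {a, b, c, d} ⊆ s := by simp [Finset.insert_subset_iff, ha, hb, hc, hd]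
  have hDmem : D ∈ ({a, b, c, d} : Finset V) := Finset.eq_of_subset_of_card_le hsub hcard ▸ hD.1
  simp only [Finset.mem_insert, Finset.mem_singleton] at hDmem
  rcases hDmem with rfl | rfl | rfl | rfl
  · exact hbd (hpendant hb hd hab hda.symm)
  · exact hac (hpendant ha hc hab.symm hbc)
  · exact hbd (hpendant hb hd hbc.symm hcd)
  · exact hac (hpendant ha hc hda hcd.symm)

theorem false_of_chord {a b c d : V} (hab : (fromEdgeSet (Set.range f)).Adj a b)
    (hbc : (fromEdgeSet (Set.range f)).Adj b c) (hcd : (fromEdgeSet (Set.range f)).Adj c d)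
    (hda : (fromEdgeSet (Set.range f)).Adj d a) (hac : a ≠ c) (hbd : b ≠ d) (hac' : G.Adj a c) :
    False := by
  have hle := fromEdgeSet_range_le hf
  have hclique {s : Finset V} (hs : G.IsNClique 4 s) (ha : a ∈ s) (hc : c ∈ s) : False :=
    false_of_isNClique_four hG hf hs ha (hG.mem_of_adj_of_adj hs ha hc hac (hle hab).symm (hle hbc))
      hc (hG.mem_of_adj_of_adj hs ha hc hac (hle hda) (hle hcd).symm) hab hbc hcd hda hac hbd
  rcases isNClique_four_or_subsingleton_of_adj hf hab with ⟨s, hs, ha, hb⟩ | ⟨hS, t, ht, ha, hb⟩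
  · exact hclique hs ha (hG.mem_of_adj_of_adj hs ha hb hab.ne hac'.symm (hle hbc).symm)
  rcases isNClique_four_or_subsingleton_of_adj hf hbc with
    ⟨s, hs, hb', hc⟩ | ⟨hS', t', ht', hb', hc⟩
  · exact hclique hs (hG.mem_of_adj_of_adj hs hb' hc hbc.ne (hle hab) hac') hc
  have htt' : t = t' := Subtype.ext <| by
    rw [t.2.eq_insert_of_subsingleton ha hb hab.ne hS ⟨hac', hle hbc⟩,
      t'.2.eq_insert_of_subsingleton hb' hc hbc.ne hS' ⟨(hle hab).symm, hac'.symm⟩,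
      Finset.insert_comm, Finset.pair_comm]
  rw [htt', ht'] at ht
  rcases Sym2.eq_iff.1 ht with ⟨h, -⟩ | ⟨-, h⟩
  · exact hab.ne h.symm
  · exact hac h.symm

theorem c4Free_fromEdgeSet_range : C4Free (fromEdgeSet (Set.range f)) := by
  intro v w hw h4
  have hle := fromEdgeSet_range_le hf
  obtain ⟨a, b, c, d, hab, hbc, hcd, hda, hac, hbd⟩ := hw.exists_adj_of_length_eq_four h4
  obtain ⟨z, hza, hzb⟩ : (G.commonNeighbors a b).Nonempty := by
    rcases isNClique_four_or_subsingleton_of_adj hf hab with ⟨s, hs, ha, hb⟩ | ⟨-, t, -, ha, hb⟩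
    · exact hs.commonNeighbors_nonempty (by norm_num) ha hb hab.ne
    · exact t.2.commonNeighbors_nonempty le_rfl ha hb hab.ne
  -- otherwise `z a d c b` is a 5-cycle
  by_cases hzc : z = c
  · exact false_of_chord hG hf hab hbc hcd hda hac hbd (hzc ▸ hza)
  by_cases hzd : z = d
  · exact false_of_chord hG hf hbc hcd hda hab hbd (Ne.symm hac) (hzd ▸ hzb)
  exact hG.false_of_adj hza.symm (hle hda).symm (hle hcd).symm (hle hbc).symm hzb hzd hzc hac
    hab.ne (Ne.symm hbd)

end SelectedGraph

end

theorem exists_C4C5_free_subgraph_with_edges_eq_triangles_general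
    {V : Type*} (G : SimpleGraph V) (hG : C5Free G) :
    ∃ H : SimpleGraph V, H ≤ G ∧ C4Free H ∧ C5Free H ∧
      H.edgeSet.ncard = {t : Finset V | G.IsNClique 3 t}.ncard := by
  let : LinearOrder V := WellOrderingRel.isWellOrder.linearOrder
  choose f hf using fun t : G.cliqueSet 3 => exists_isSelectedEdge hG t.2
  exact ⟨fromEdgeSet (Set.range f), fromEdgeSet_range_le hf, c4Free_fromEdgeSet_range hG hf,
    hG.mono (fromEdgeSet_range_le hf), ncard_edgeSet_fromEdgeSet_range hG hf⟩

theorem exists_C4C5_free_subgraph_with_edges_eq_triangles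
    {V : Type*} [Fintype V] (G : SimpleGraph V) (hG : C5Free G) :
    ∃ H : SimpleGraph V, H ≤ G ∧ C4Free H ∧ C5Free H ∧
      H.edgeSet.ncard = {t : Finset V | G.IsNClique 3 t}.ncard :=
  exists_C4C5_free_subgraph_with_edges_eq_triangles_general G hG
end

section
/- Let G be a simple graph that contains no cycle of length 5 as a subgraph and in which every edge is contained in at least one triangle. Then for every cycle x, y, z, w of length 4 in G, all four edges xy, yz, zw, wx are contained in triangles belonging to one single block of G. -/
/-!
An edge `xy` of the 4-cycle `xyzw` lies in a triangle `xya`. If the apex `a` were neither `z` nor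
`w`, then `a x w z y` would be a 5-cycle; so the 4-cycle has a chord `xz` or `yw`, and the two
triangles on either side of the chord share it, hence lie in one block and cover all four edges.
-/

open SimpleGraph

/-- Two triangles of `G` lie in the same block if they are connected by a chain of
triangles of `G` in which any two consecutive triangles share two vertices (an edge). -/
def SameBlock {V : Type*} [DecidableEq V] (G : SimpleGraph V) (T T' : Finset V) : Prop :=
  Relation.ReflTransGen
    (fun A B => G.IsNClique 3 A ∧ G.IsNClique 3 B ∧ 2 ≤ (A ∩ B).card) T T'

section

variable {V : Type*} {G : SimpleGraph V}

theorem C5Free.false_of_pentagon (hC5 : C5Free G) {a b c d e : V}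
    (hab : G.Adj a b) (hbc : G.Adj b c) (hcd : G.Adj c d) (hde : G.Adj d e) (hea : G.Adj e a)
    (hac : a ≠ c) (had : a ≠ d) (hbd : b ≠ d) (hbe : b ≠ e) (hce : c ≠ e) : False := by
  refine hC5 a (.cons hab (.cons hbc (.cons hcd (.cons hde (.cons hea .nil))))) ?_ rfl
  refine ⟨⟨?_, by simp⟩, ?_⟩ <;> simp [Walk.isTrail_def, Sym2.eq, Sym2.rel_iff'] <;> aesop

theorem C5Free.adj_or_adj_of_cycle4 (hC5 : C5Free G) {x y z w a : V} (hxz : x ≠ z) (hyw : y ≠ w)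
    (hxy : G.Adj x y) (hyz : G.Adj y z) (hzw : G.Adj z w) (hwx : G.Adj w x)
    (hxa : G.Adj x a) (hya : G.Adj y a) : G.Adj x z ∨ G.Adj y w := by
  by_cases haz : a = z
  · exact .inl (haz ▸ hxa)
  by_cases haw : a = w
  · exact .inr (haw ▸ hya)
  exact (hC5.false_of_pentagon hxa.symm hwx.symm hzw.symm hyz.symm hya haw haz hxz
    hxy.ne hyw.symm).elim

variable [DecidableEq V]

def EdgeInBlock (G : SimpleGraph V) (T : Finset V) (u v : V) : Prop :=
  ∃ T' : Finset V, G.IsNClique 3 T' ∧ SameBlock G T T' ∧ u ∈ T' ∧ v ∈ T'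

theorem SameBlock.of_mem_of_mem {A B : Finset V} {u v : V} (hA : G.IsNClique 3 A)
    (hB : G.IsNClique 3 B) (huv : u ≠ v) (huA : u ∈ A) (hvA : v ∈ A) (huB : u ∈ B)
    (hvB : v ∈ B) : SameBlock G A B := by
  refine .single ⟨hA, hB, ?_⟩
  calc 2 = ({u, v} : Finset V).card := (Finset.card_pair huv).symm
    _ ≤ (A ∩ B).card := Finset.card_le_card (by grind)

theorem EdgeInBlock.of_mem {T : Finset V} {u v : V} (hT : G.IsNClique 3 T) (hu : u ∈ T)
    (hv : v ∈ T) : EdgeInBlock G T u v :=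
  ⟨T, hT, .refl, hu, hv⟩

theorem exists_edgeInBlock_of_cycle4_of_adj {x y z w : V}
    (hxy : G.Adj x y) (hyz : G.Adj y z) (hzw : G.Adj z w) (hwx : G.Adj w x) (hxz : G.Adj x z) :
    ∃ T : Finset V, G.IsNClique 3 T ∧ EdgeInBlock G T x y ∧ EdgeInBlock G T y z ∧
      EdgeInBlock G T z w ∧ EdgeInBlock G T w x := by
  have hT : G.IsNClique 3 {x, y, z} := is3Clique_triple_iff.2 ⟨hxy, hxz, hyz⟩
  have hT' : G.IsNClique 3 {x, z, w} := is3Clique_triple_iff.2 ⟨hxz, hwx.symm, hzw⟩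
  have hblock : SameBlock G {x, y, z} {x, z, w} :=
    .of_mem_of_mem hT hT' hxz.ne (by simp) (by simp) (by simp) (by simp)
  exact ⟨_, hT, .of_mem hT (by simp) (by simp), .of_mem hT (by simp) (by simp),
    ⟨_, hT', hblock, by simp, by simp⟩, ⟨_, hT', hblock, by simp, by simp⟩⟩

end

theorem C4_edges_in_one_block {V : Type*} [DecidableEq V] (G : SimpleGraph V)
    (hC5 : C5Free G)
    (hEdge : ∀ u v : V, G.Adj u v → ∃ w : V, G.Adj u w ∧ G.Adj v w)
    (x y z w : V) (hxz : x ≠ z) (hyw : y ≠ w)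
    (hxy : G.Adj x y) (hyz : G.Adj y z) (hzw : G.Adj z w) (hwx : G.Adj w x) :
    ∃ T : Finset V, G.IsNClique 3 T ∧
      (∃ T1 : Finset V, G.IsNClique 3 T1 ∧ SameBlock G T T1 ∧ x ∈ T1 ∧ y ∈ T1) ∧
      (∃ T2 : Finset V, G.IsNClique 3 T2 ∧ SameBlock G T T2 ∧ y ∈ T2 ∧ z ∈ T2) ∧
      (∃ T3 : Finset V, G.IsNClique 3 T3 ∧ SameBlock G T T3 ∧ z ∈ T3 ∧ w ∈ T3) ∧
      (∃ T4 : Finset V, G.IsNClique 3 T4 ∧ SameBlock G T T4 ∧ w ∈ T4 ∧ x ∈ T4) := by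
  obtain ⟨a, hxa, hya⟩ := hEdge x y hxy
  rcases hC5.adj_or_adj_of_cycle4 hxz hyw hxy hyz hzw hwx hxa hya with hxz' | hyw'
  · exact exists_edgeInBlock_of_cycle4_of_adj hxy hyz hzw hwx hxz'
  · obtain ⟨T, hT, hyz, hzw, hwx, hxy⟩ := exists_edgeInBlock_of_cycle4_of_adj hyz hzw hwx hxy hyw'
    exact ⟨T, hT, hxy, hyz, hzw, hwx⟩
end
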